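/- (Supersolution barrier for the second-order homogeneous equation.) Let $q > 2$, $A > 1$, and $q' = q/(q-1)$. There exist constants $C = C(q,A,d) > 0$ and $\nu_0 = \nu_0(q,A,d) > 0$ such that for every $\eta > 0$ and every $\nu$ with $0 < \nu < \eta\nu_0$, the smooth function $U(x,t) := C\,(|x|^2 + \eta t)^{q'/2}\, t^{-(q'-1)}$ on $\mathbb{R}^d \times (0,\infty)$ satisfies pointwise $\partial_t U - \nu m_+(D^2 U) + \frac{1}{2A}|DU|^q \ge 0$. -/

import Mathlib

/-- The barrier `U(x,t) = C (|x|² + ηt)^{q'/2} t^{-(q'-1)}` with `q' = q/(q-1)`. -/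
noncomputable def Ubar (d : ℕ) (q C η : ℝ) (x : EuclideanSpace ℝ (Fin d)) (t : ℝ) : ℝ :=
  C * (‖x‖ ^ 2 + η * t) ^ (q / (q - 1) / 2) * t ^ (-(q / (q - 1) - 1))

open Real

variable {E : Type*} [NormedAddCommGroup E] [InnerProductSpace ℝ E]

lemma hasFDerivAt_barrier (K b p : ℝ) (hb : 0 < b) (z : E) :
    HasFDerivAt (fun w : E => K * (‖w‖ ^ 2 + b) ^ p)
      ((K * (p * (‖z‖ ^ 2 + b) ^ (p - 1)) * 2) • innerSL ℝ z) z := by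
  have h0 : (0:ℝ) < ‖z‖ ^ 2 + b := by positivity
  have h1 : HasFDerivAt (fun w : E => ‖w‖ ^ 2 + b) (2 • innerSL ℝ z) z := by
    simpa using ((hasFDerivAt_id z).norm_sq).add_const b
  have h2 := (h1.rpow_const (p := p) (Or.inl h0.ne')).const_mul K
  refine h2.congr_fderiv ?_
  ext v
  simp only [ContinuousLinearMap.smul_apply, smul_eq_mul, nsmul_eq_mul]
  ring

lemma hasFDerivAt_Ubar (d : ℕ) (q C η t : ℝ) (hb : 0 < η * t)
    (z : EuclideanSpace ℝ (Fin d)) :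
    HasFDerivAt (fun w => Ubar d q C η w t)
      ((C * t ^ (-(q / (q - 1) - 1)) * (q / (q - 1) / 2)
        * (‖z‖ ^ 2 + η * t) ^ (q / (q - 1) / 2 - 1) * 2) • innerSL ℝ z) z := by
  have h := (hasFDerivAt_barrier C (η * t) (q / (q - 1) / 2) hb z).mul_const
    (t ^ (-(q / (q - 1) - 1)))
  refine h.congr_fderiv ?_
  rw [smul_smul]
  congr 1
  ring

lemma hasDerivAt_Ubar (d : ℕ) (q C η : ℝ) (x : EuclideanSpace ℝ (Fin d)) {t : ℝ}
    (ht : 0 < t) (hη : 0 < η) :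
    HasDerivAt (fun s => Ubar d q C η x s)
      (C * ((q / (q - 1) / 2) * (‖x‖ ^ 2 + η * t) ^ (q / (q - 1) / 2 - 1) * η)
          * t ^ (-(q / (q - 1) - 1))
        + C * (‖x‖ ^ 2 + η * t) ^ (q / (q - 1) / 2)
          * (-(q / (q - 1) - 1) * t ^ (-(q / (q - 1) - 1) - 1))) t := by
  have h0 : (0:ℝ) < ‖x‖ ^ 2 + η * t := by positivity
  have h1 : HasDerivAt (fun s : ℝ => ‖x‖ ^ 2 + η * s) η t := by
    simpa using ((hasDerivAt_id t).const_mul η).const_add (‖x‖ ^ 2)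
  have h2 := (h1.rpow_const (p := q / (q - 1) / 2) (Or.inl h0.ne')).const_mul C
  have h4 : HasDerivAt (fun s : ℝ => s ^ (-(q / (q - 1) - 1)))
      (-(q / (q - 1) - 1) * t ^ (-(q / (q - 1) - 1) - 1)) t :=
    Real.hasDerivAt_rpow_const (Or.inl ht.ne')
  have h5 := h2.mul h4
  refine h5.congr_deriv ?_
  ring

lemma second_dir_le (d : ℕ) (q C η t : ℝ) (hq : 2 < q) (hC : 0 ≤ C) (ht : 0 < t)
    (hb : 0 < η * t) (x v : EuclideanSpace ℝ (Fin d)) (hv : ‖v‖ ≤ 1) :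
    fderiv ℝ (fun z => fderiv ℝ (fun w => Ubar d q C η w t) z v) x v
      ≤ C * t ^ (-(q / (q - 1) - 1)) * (q / (q - 1) / 2) * 2
          * (‖x‖ ^ 2 + η * t) ^ (q / (q - 1) / 2 - 1) := by
  set P : ℝ := q / (q - 1) / 2 with hP
  set K0 : ℝ := C * t ^ (-(q / (q - 1) - 1)) * P * 2 with hK0
  have hq1 : (1:ℝ) < q - 1 := by linarith
  have hPpos : 0 < P := by
    have : 0 < q / (q - 1) := div_pos (by linarith) (by linarith)
    positivity
  have hPlt : P < 1 := by
    rw [hP, div_lt_one (by norm_num : (0:ℝ) < 2), div_lt_iff₀ (by linarith : (0:ℝ) < q - 1)]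
    linarith
  have hK0nn : 0 ≤ K0 := by
    have : (0:ℝ) ≤ t ^ (-(q / (q - 1) - 1)) := Real.rpow_nonneg ht.le _
    positivity
  have hF : (fun z : EuclideanSpace ℝ (Fin d) => fderiv ℝ (fun w => Ubar d q C η w t) z v)
      = fun z => (K0 * (‖z‖ ^ 2 + η * t) ^ (P - 1)) * (innerSL ℝ v) z := by
    funext z
    rw [(hasFDerivAt_Ubar d q C η t hb z).fderiv]
    simp only [ContinuousLinearMap.smul_apply, innerSL_apply_apply, smul_eq_mul]
    rw [real_inner_comm]
    ring
  rw [hF]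
  have h1 := hasFDerivAt_barrier K0 (η * t) (P - 1) hb x
  have h2 := h1.mul ((innerSL ℝ v).hasFDerivAt (x := x))
  rw [HasFDerivAt.fderiv (f := fun z => K0 * (‖z‖ ^ 2 + η * t) ^ (P - 1) * ((innerSL ℝ) v) z) h2]
  simp only [ContinuousLinearMap.add_apply, ContinuousLinearMap.smul_apply,
    ContinuousLinearMap.smul_apply, innerSL_apply_apply, smul_eq_mul]
  have hG : (0:ℝ) < ‖x‖ ^ 2 + η * t := by positivity
  have h3 : (inner ℝ v v : ℝ) = ‖v‖ ^ 2 := real_inner_self_eq_norm_sq v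
  have h4 : (inner ℝ v x : ℝ) * ((K0 * ((P - 1) * (‖x‖ ^ 2 + η * t) ^ (P - 1 - 1)) * 2)
      * (inner ℝ x v : ℝ)) ≤ 0 := by
    rw [real_inner_comm v x]
    have hsq : (0:ℝ) ≤ (inner ℝ x v : ℝ) * (inner ℝ x v : ℝ) := mul_self_nonneg _
    have hfac : K0 * ((P - 1) * (‖x‖ ^ 2 + η * t) ^ (P - 1 - 1)) * 2 ≤ 0 := by
      have h8 : (0:ℝ) ≤ (‖x‖ ^ 2 + η * t) ^ (P - 1 - 1) := Real.rpow_nonneg hG.le _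
      nlinarith [mul_nonneg hK0nn h8]
    nlinarith [mul_self_nonneg ((inner ℝ v x : ℝ)), mul_self_nonneg ((inner ℝ x v : ℝ))]
  have h5 : K0 * (‖x‖ ^ 2 + η * t) ^ (P - 1) * (inner ℝ v v : ℝ)
      ≤ K0 * (‖x‖ ^ 2 + η * t) ^ (P - 1) := by
    rw [h3]
    have h6 : ‖v‖ ^ 2 ≤ 1 := by nlinarith [norm_nonneg v]
    have h7 : (0:ℝ) ≤ K0 * (‖x‖ ^ 2 + η * t) ^ (P - 1) := by
      have := Real.rpow_nonneg hG.le (P - 1); positivity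
    nlinarith
  calc K0 * (‖x‖ ^ 2 + η * t) ^ (P - 1) * (inner ℝ v v : ℝ)
        + (inner ℝ v x : ℝ) * ((K0 * ((P - 1) * (‖x‖ ^ 2 + η * t) ^ (P - 1 - 1)) * 2)
          * (inner ℝ x v : ℝ))
      ≤ K0 * (‖x‖ ^ 2 + η * t) ^ (P - 1) := by linarith
    _ = C * t ^ (-(q / (q - 1) - 1)) * P * 2 * (‖x‖ ^ 2 + η * t) ^ (P - 1) := by rw [hK0]


set_option maxHeartbeats 2000000 in
lemma key (q A : ℝ) (hq : 2 < q) (hA : 1 < A) :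
    ∃ C : ℝ, 1 ≤ C ∧ ∃ ν₀ : ℝ, 0 < ν₀ ∧ ∀ η : ℝ, 0 < η → ∀ ν : ℝ, 0 < ν → ν < η * ν₀ →
      ∀ r : ℝ, 0 ≤ r → ∀ t : ℝ, 0 < t →
      0 ≤ (C * ((q/(q-1)/2) * (r^2+η*t) ^ (q/(q-1)/2-1) * η) * t ^ (-(q/(q-1)-1))
            + C * (r^2+η*t) ^ (q/(q-1)/2) * (-(q/(q-1)-1) * t ^ (-(q/(q-1)-1)-1)))
          - ν * (C * t ^ (-(q/(q-1)-1)) * (q/(q-1)/2) * 2 * (r^2+η*t) ^ (q/(q-1)/2-1))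
          + 1/(2*A) * (C * t ^ (-(q/(q-1)-1)) * (q/(q-1)/2)
              * (r^2+η*t) ^ (q/(q-1)/2-1) * 2 * r) ^ q := by
  have hq1 : (0:ℝ) < q - 1 := by linarith
  set P : ℝ := q / (q - 1) / 2 with hP
  set a : ℝ := q / (q - 1) - 1 with ha
  have hP2 : P < 1 := by
    rw [hP, div_lt_one (by norm_num : (0:ℝ) < 2), div_lt_iff₀ hq1]; linarith
  have hP1 : 1/2 < P := by
    rw [hP, lt_div_iff₀ (by norm_num : (0:ℝ) < 2), lt_div_iff₀ hq1]; linarith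
  have ha2 : a = 2 * P - 1 := by rw [ha, hP]; ring
  have hapos : 0 < a := by rw [ha2]; linarith
  have haq : a * q = a + 1 := by rw [ha]; field_simp; ring
  have hPq : (P - 1) * (q - 1) = -((q-2)/2) := by rw [hP]; field_simp; ring
  set m : ℝ := (q - 2) / 2 with hm
  have hm0 : 0 < m := by rw [hm]; linarith
  set β : ℝ := (3 * P - 1) / (1 - P) with hβ
  have hβ1 : 1 ≤ β := by
    rw [hβ, le_div_iff₀ (by linarith : (0:ℝ) < 1 - P)]; linarith
  have hβm : (0:ℝ) < β ^ m := Real.rpow_pos_of_pos (by linarith) m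
  set C : ℝ := (1 + 2 * A * a * β ^ m) ^ (1 / (q - 1)) with hC
  have hbase : (1:ℝ) ≤ 1 + 2 * A * a * β ^ m := by
    nlinarith [mul_pos (mul_pos (by linarith : (0:ℝ) < 2 * A) hapos) hβm]
  have hC1 : 1 ≤ C := Real.one_le_rpow hbase (by positivity)
  have hCq : C ^ (q - 1) = 1 + 2 * A * a * β ^ m := by
    rw [hC, ← Real.rpow_mul (by linarith : (0:ℝ) ≤ 1 + 2 * A * a * β ^ m), one_div,
      inv_mul_cancel₀ hq1.ne', Real.rpow_one]
  have hCpos : (0:ℝ) < C := lt_of_lt_of_le one_pos hC1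
  clear_value P a m β C
  refine ⟨C, hC1, (1 - P) / (4 * P), div_pos (by linarith) (by linarith), ?_⟩
  intro η hη ν hν hνη r hr t ht
  set G : ℝ := r ^ 2 + η * t with hG
  have hGpos : 0 < G := by rw [hG]; positivity
  set T : ℝ := t ^ (-a) with hT
  have hTpos : 0 < T := Real.rpow_pos_of_pos ht _
  set W : ℝ := G ^ (P - 1) with hW
  have hWpos : 0 < W := Real.rpow_pos_of_pos hGpos _
  clear_value G T W
  -- basic rewrites
  have ht1 : t ^ (-a - 1) = T / t := by
    rw [hT, show -a - 1 = -a - 1 from rfl, Real.rpow_sub ht, Real.rpow_one]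
  have hGP : G ^ P = W * G := by
    rw [hW, show P = (P - 1) + 1 by ring, Real.rpow_add_one hGpos.ne']
    norm_num
  have hTq : T ^ q = T / t := by
    rw [hT, ← Real.rpow_mul ht.le, show -a * q = -a - 1 by linear_combination -haq,
      Real.rpow_sub ht, Real.rpow_one]
  have hWq : W ^ q = W * G ^ (-m) := by
    rw [hW, ← Real.rpow_mul hGpos.le,
      show (P - 1) * q = (P - 1) + -m by linear_combination hPq,
      Real.rpow_add hGpos]
  have hNq : (C * T * P * W * 2 * r) ^ q
      = C ^ (q - 1) * C * (T / t) * P ^ q * (W * G ^ (-m)) * 2 ^ q * r ^ q := by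
    rw [Real.mul_rpow (by positivity) hr,
      Real.mul_rpow (by positivity) (by norm_num : (0:ℝ) ≤ 2),
      Real.mul_rpow (by positivity) hWpos.le,
      Real.mul_rpow (by positivity) (by linarith : (0:ℝ) ≤ P),
      Real.mul_rpow hCpos.le hTpos.le, hTq, hWq,
      ← Real.rpow_add_one hCpos.ne' (q - 1), sub_add_cancel]
  rw [ht1, hGP, hNq]
  set fac : ℝ := C * T * W / t with hfac
  clear_value fac
  have hfacpos : 0 < fac := by rw [hfac]; positivity
  have hrw : (C * (P * W * η) * T + C * (W * G) * (-a * (T / t)))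
        - ν * (C * T * P * 2 * W)
      = fac * (P * η * t - a * G - 2 * ν * P * t) := by
    rw [hfac]; field_simp; ring
  have hgr : 1/(2*A) * (C ^ (q-1) * C * (T / t) * P ^ q * (W * G ^ (-m)) * 2 ^ q * r ^ q)
      = fac * (1/(2*A) * C ^ (q-1) * P ^ q * 2 ^ q * G ^ (-m) * r ^ q) := by
    rw [hfac]; field_simp
  rw [hrw, hgr, ← mul_add]
  apply mul_nonneg hfacpos.le
  -- the scalar inequality
  have hνP : 2 * ν * P * t ≤ (1 - P) * η * t / 2 := by
    have h4P : (0:ℝ) < 4 * P := by linarith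
    have h1 := mul_lt_mul_of_pos_right hνη h4P
    have hsimp : η * ((1 - P) / (4 * P)) * (4 * P) = η * (1 - P) := by field_simp
    rw [hsimp] at h1
    linarith [mul_le_mul_of_nonneg_right h1.le ht.le]
  rcases le_or_gt (a * r ^ 2) ((1 - P) * η * t / 2) with hcase | hcase
  · -- Case A
    have hkey2 : 0 ≤ P * η * t - a * G - 2 * ν * P * t := by
      rw [hG]
      have h9 : a * (η * t) = (2 * P - 1) * (η * t) := by rw [ha2]
      linarith [hcase, hνP, h9]
    have hbig : 0 ≤ 1/(2*A) * C ^ (q-1) * P ^ q * 2 ^ q * G ^ (-m) * r ^ q := by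
      have h1 : (0:ℝ) ≤ G ^ (-m) := (Real.rpow_pos_of_pos hGpos _).le
      have h2 : (0:ℝ) ≤ r ^ q := Real.rpow_nonneg hr _
      have h3 : (0:ℝ) ≤ C ^ (q-1) := (Real.rpow_pos_of_pos hCpos _).le
      have h4 : (0:ℝ) ≤ P ^ q := (Real.rpow_pos_of_pos (by linarith) q).le
      have h5 : (0:ℝ) ≤ (2:ℝ) ^ q := (Real.rpow_pos_of_pos (by norm_num) q).le
      have h6 : (0:ℝ) < 2 * A := by linarith
      positivity
    linarith
  · -- Case B
    have hrpos : 0 < r := by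
      rcases eq_or_lt_of_le hr with h | h
      · exfalso
        have : (0:ℝ) < (1 - P) * η * t / 2 := by
          have : (0:ℝ) < 1 - P := by linarith
          positivity
        rw [← h] at hcase
        simp at hcase
        nlinarith
      · exact h
    have hGβ : G ≤ β * r ^ 2 := by
      have h10 : (1 - P) * G ≤ (3 * P - 1) * r ^ 2 := by
        have h9 : a * r ^ 2 = (2 * P - 1) * r ^ 2 := by rw [ha2]
        rw [hG]; linarith [hcase, h9]
      rw [hβ, div_mul_eq_mul_div, le_div_iff₀ (by linarith : (0:ℝ) < 1 - P)]
      linarith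
    have h11 : G ^ m ≤ β ^ m * r ^ (q - 2) := by
      calc G ^ m ≤ (β * r ^ 2) ^ m :=
            Real.rpow_le_rpow hGpos.le hGβ hm0.le
        _ = β ^ m * (r ^ 2 : ℝ) ^ (m : ℝ) := by
            rw [Real.mul_rpow (by linarith : (0:ℝ) ≤ β) (by positivity)]
        _ = β ^ m * r ^ (q - 2) := by
            congr 1
            rw [← Real.rpow_natCast r 2, ← Real.rpow_mul hr]
            congr 1
            rw [hm]; push_cast; ring
    have hX : (0:ℝ) < G ^ m := Real.rpow_pos_of_pos hGpos m
    have hY : (0:ℝ) < r ^ (q - 2) := Real.rpow_pos_of_pos hrpos _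
    have hrq : r ^ q = r ^ 2 * r ^ (q - 2) := by
      rw [← Real.rpow_natCast r 2, ← Real.rpow_add hrpos]
      push_cast
      norm_num
    have h2P : (1:ℝ) ≤ 2 ^ q * P ^ q := by
      rw [← Real.mul_rpow (by norm_num) (by linarith : (0:ℝ) ≤ P)]
      exact Real.one_le_rpow (by linarith) (by linarith)
    have hAB : a * β ^ m ≤ 1/(2*A) * (1 + 2 * A * a * β ^ m) := by
      have he : 1/(2*A) * (1 + 2 * A * a * β ^ m) = 1/(2*A) + a * β ^ m := by
        field_simp
      rw [he]
      have : (0:ℝ) < 1/(2*A) := by positivity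
      linarith
    have hfin : a * r ^ 2 ≤ 1/(2*A) * C ^ (q-1) * P ^ q * 2 ^ q * G ^ (-m) * r ^ q := by
      rw [hCq, hrq, Real.rpow_neg hGpos.le]
      rw [show 1/(2*A) * (1 + 2*A*a*β^m) * P ^ q * 2 ^ q * (G ^ m)⁻¹ * (r ^ 2 * r ^ (q-2))
          = (1/(2*A) * (1 + 2*A*a*β^m) * P ^ q * 2 ^ q * (r ^ 2 * r ^ (q-2))) / G ^ m
          by ring, le_div_iff₀ hX]
      calc a * r ^ 2 * G ^ m ≤ a * r ^ 2 * (β ^ m * r ^ (q-2)) :=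
            mul_le_mul_of_nonneg_left h11 (by positivity)
        _ = (a * β ^ m) * (r ^ 2 * r ^ (q-2)) := by ring
        _ ≤ (1/(2*A) * (1 + 2*A*a*β^m)) * (r ^ 2 * r ^ (q-2)) :=
            mul_le_mul_of_nonneg_right hAB (by positivity)
        _ ≤ (1/(2*A) * (1 + 2*A*a*β^m)) * (2 ^ q * P ^ q * (r ^ 2 * r ^ (q-2))) := by
            have hpos1 : (0:ℝ) ≤ 1/(2*A) * (1 + 2*A*a*β^m) := by positivity
            have hpos2 : (0:ℝ) ≤ r ^ 2 * r ^ (q-2) := by positivity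
            exact mul_le_mul_of_nonneg_left (le_mul_of_one_le_left hpos2 h2P) hpos1
        _ = 1/(2*A) * (1 + 2*A*a*β^m) * P ^ q * 2 ^ q * (r ^ 2 * r ^ (q-2)) := by ring
    have hΔ : -(a * r ^ 2) ≤ P * η * t - a * G - 2 * ν * P * t := by
      rw [hG]
      have h9 : a * (η * t) = (2 * P - 1) * (η * t) := by rw [ha2]
      linarith [hνP, h9, mul_pos (show (0:ℝ) < 1 - P by linarith) (mul_pos hη ht)]
    linarith



set_option maxHeartbeats 2000000 in
set_option synthInstance.maxHeartbeats 400000 in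
/-- Supersolution barrier for the second-order homogeneous equation:
for `q > 2`, `A > 1` there are `C, ν₀ > 0` such that for `0 < ν < η ν₀`,
`∂_t U - ν m₊(D²U) + (1/2A)|DU|^q ≥ 0` pointwise on `ℝ^d × (0,∞)`,
where `m₊(D²U)` is the supremum of second directional derivatives over `|v| ≤ 1`. -/
theorem stmt9 (d : ℕ) (q A : ℝ) (hq : 2 < q) (hA : 1 < A) :
    ∃ C : ℝ, 0 < C ∧ ∃ ν₀ : ℝ, 0 < ν₀ ∧
      ∀ η : ℝ, 0 < η → ∀ ν : ℝ, 0 < ν → ν < η * ν₀ →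
      ∀ (x : EuclideanSpace ℝ (Fin d)) (t : ℝ), 0 < t →
        0 ≤ deriv (fun s => Ubar d q C η x s) t
            - ν * sSup {y : ℝ | ∃ v : EuclideanSpace ℝ (Fin d), ‖v‖ ≤ 1 ∧
                y = fderiv ℝ (fun z => fderiv ℝ (fun w => Ubar d q C η w t) z v) x v}
            + (1 / (2 * A)) * ‖fderiv ℝ (fun w => Ubar d q C η w t) x‖ ^ q := by
  obtain ⟨C, hC1, ν₀, hν₀, hkey⟩ := key q A hq hA
  have hC0 : (0:ℝ) < C := by linarith
  refine ⟨C, hC0, ν₀, hν₀, ?_⟩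
  intro η hη ν hν hνν₀ x t ht
  have hb : 0 < η * t := mul_pos hη ht
  have hG : (0:ℝ) < ‖x‖ ^ 2 + η * t := by positivity
  -- time derivative
  rw [(hasDerivAt_Ubar d q C η x ht hη).deriv]
  -- spatial gradient
  rw [(hasFDerivAt_Ubar d q C η t hb x).fderiv]
  have hK : (0:ℝ) ≤ C * t ^ (-(q / (q - 1) - 1)) * (q / (q - 1) / 2)
      * (‖x‖ ^ 2 + η * t) ^ (q / (q - 1) / 2 - 1) * 2 := by
    have h1 : (0:ℝ) ≤ t ^ (-(q / (q - 1) - 1)) := Real.rpow_nonneg ht.le _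
    have h2 : (0:ℝ) ≤ (‖x‖ ^ 2 + η * t) ^ (q / (q - 1) / 2 - 1) := Real.rpow_nonneg hG.le _
    have h3 : (0:ℝ) < q / (q - 1) / 2 := by
      have : (0:ℝ) < q / (q - 1) := div_pos (by linarith) (by linarith)
      positivity
    positivity
  have hnorm : ‖(C * t ^ (-(q / (q - 1) - 1)) * (q / (q - 1) / 2)
        * (‖x‖ ^ 2 + η * t) ^ (q / (q - 1) / 2 - 1) * 2) • innerSL ℝ x‖
      = C * t ^ (-(q / (q - 1) - 1)) * (q / (q - 1) / 2)
        * (‖x‖ ^ 2 + η * t) ^ (q / (q - 1) / 2 - 1) * 2 * ‖x‖ := by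
    rw [norm_smul (α := ℝ) (β := EuclideanSpace ℝ (Fin d) →L[ℝ] ℝ) _ (innerSL ℝ x),
      innerSL_apply_norm, Real.norm_eq_abs, abs_of_nonneg hK]
  rw [hnorm]
  -- bound on the Hessian supremum
  have hS : sSup {y : ℝ | ∃ v : EuclideanSpace ℝ (Fin d), ‖v‖ ≤ 1 ∧
        y = fderiv ℝ (fun z => fderiv ℝ (fun w => Ubar d q C η w t) z v) x v}
      ≤ C * t ^ (-(q / (q - 1) - 1)) * (q / (q - 1) / 2) * 2
        * (‖x‖ ^ 2 + η * t) ^ (q / (q - 1) / 2 - 1) := by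
    apply Real.sSup_le
    · rintro y ⟨v, hv, rfl⟩
      exact second_dir_le d q C η t hq hC0.le ht hb x v hv
    · have h1 : (0:ℝ) ≤ t ^ (-(q / (q - 1) - 1)) := Real.rpow_nonneg ht.le _
      have h2 : (0:ℝ) ≤ (‖x‖ ^ 2 + η * t) ^ (q / (q - 1) / 2 - 1) := Real.rpow_nonneg hG.le _
      have h3 : (0:ℝ) < q / (q - 1) / 2 := by
        have : (0:ℝ) < q / (q - 1) := div_pos (by linarith) (by linarith)
        positivity
      positivity
  have hSν := mul_le_mul_of_nonneg_left hS hν.le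
  have hmain := hkey η hη ν hν hνν₀ ‖x‖ (norm_nonneg x) t ht
  have h1A : 1 / (2 * A) = 1/(2*A) := rfl
  linarith [hmain, hSν]
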